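/- Every connected {Z₂, P₆}-free graph on at least 2 vertices has edge-connectivity equal to its minimum degree. -/

import Mathlib

open SimpleGraph

/-- The edge-connectivity of `G`: the minimum number of edges whose deletion disconnects `G`. -/
noncomputable def edgeConn {V : Type*} [Fintype V] (G : SimpleGraph V) : ℕ :=
  sInf {k | ∃ F : Finset (Sym2 V), ↑F ⊆ G.edgeSet ∧ F.card = k ∧ ¬ (G.deleteEdges ↑F).Connected}

/-- The minimum degree of `G`. -/
noncomputable def minDeg {V : Type*} [Fintype V] (G : SimpleGraph V) : ℕ :=
  sInf {d | ∃ v : V, d = (G.neighborSet v).ncard}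

/-- `Z₂`: a triangle `{0,1,2}` with a pendant path `2-3-4` of length 2. -/
def Z2 : SimpleGraph (Fin 5) :=
  SimpleGraph.fromEdgeSet {s(0,1), s(0,2), s(1,2), s(2,3), s(3,4)}

/-!
If fewer than `δ` edges separate a vertex set `S` from its complement, each side has an
*interior* vertex, all of whose neighbours lie on its own side: otherwise every neighbour `z` of a
vertex `v ∈ S` yields its own cut edge (`vz` if `z ∉ S`, an edge leaving `z` if `z ∈ S`).
A shortest path between interior vertices `a ∈ S` and `b ∉ S` has length at least `3` and, being
induced, at most `4` since `G` has no induced `P₆`.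
For `a - u - v - b`: if some neighbour `y` of `b` misses `u`, excluding `Z₂` and `P₆` makes every
neighbour of `a` adjacent to `v` or `y`; otherwise every neighbour of `b` is adjacent to `u`.
For `a - p - u - v - b` with `u ∈ S` (the case `u ∉ S` is symmetric), every neighbour of `b` is
adjacent to `u` or `p`. Either way `deg a` or `deg b` distinct cut edges appear.
-/

namespace SimpleGraph

variable {V : Type*} {G : SimpleGraph V}

theorem nonempty_embedding_of_adj_iff {W : Type*} {H : SimpleGraph W}
    (hH : Function.Injective H.neighborSet) (f : W → V)
    (hf : ∀ i j, G.Adj (f i) (f j) ↔ H.Adj i j) : Nonempty (H ↪g G) :=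
  ⟨⟨⟨f, fun i j hij => hH <| Set.ext fun k => by simp only [mem_neighborSet, ← hf, hij]⟩,
    hf _ _⟩⟩

theorem nonempty_embedding_of_adj_iff_of_lt {W : Type*} [LinearOrder W] {H : SimpleGraph W}
    (hH : Function.Injective H.neighborSet) (f : W → V)
    (hf : ∀ i j, i < j → (G.Adj (f i) (f j) ↔ H.Adj i j)) : Nonempty (H ↪g G) := by
  refine nonempty_embedding_of_adj_iff hH f fun i j => ?_
  rcases lt_trichotomy i j with h | rfl | h
  · exact hf i j h
  · simp
  · rw [G.adj_comm, H.adj_comm]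
    exact hf j i h

theorem Z2_neighborSet_injective : Function.Injective Z2.neighborSet := by
  have key : ∀ i j : Fin 5, (∀ k, Z2.Adj i k ↔ Z2.Adj j k) → i = j := by
    simp only [Z2, fromEdgeSet_adj, Set.mem_insert_iff, Set.mem_singleton_iff]
    decide
  exact fun i j h => key i j fun k => Set.ext_iff.mp h k

theorem pathGraph_six_neighborSet_injective : Function.Injective (pathGraph 6).neighborSet := by
  have key : ∀ i j : Fin 6, (∀ k, (pathGraph 6).Adj i k ↔ (pathGraph 6).Adj j k) → i = j := by
    simp only [pathGraph_adj]
    decide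
  exact fun i j h => key i j fun k => Set.ext_iff.mp h k

structure IsInducedP4 (G : SimpleGraph V) (a u v b : V) : Prop where
  adj_au : G.Adj a u
  adj_uv : G.Adj u v
  adj_vb : G.Adj v b
  not_adj_av : ¬G.Adj a v
  not_adj_ab : ¬G.Adj a b
  not_adj_ub : ¬G.Adj u b

theorem IsInducedP4.symm {a u v b : V} (h : G.IsInducedP4 a u v b) : G.IsInducedP4 b v u a :=
  ⟨h.adj_vb.symm, h.adj_uv.symm, h.adj_au.symm, fun h' => h.not_adj_ub h'.symm,
    fun h' => h.not_adj_ab h'.symm, fun h' => h.not_adj_av h'.symm⟩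

theorem IsInducedP4.not_adj_of_isEmpty_Z2_embedding (hZ2 : IsEmpty (Z2 ↪g G)) {a u v b x : V}
    (hP : G.IsInducedP4 a u v b) (hax : G.Adj a x) (hxv : ¬G.Adj x v) (hxb : ¬G.Adj x b) :
    ¬G.Adj x u := by
  intro hxu
  obtain ⟨hau, huv, hvb, hav, hab, hub⟩ := hP
  refine hZ2.false (nonempty_embedding_of_adj_iff_of_lt Z2_neighborSet_injective
    ![a, x, u, v, b] fun i j hij => ?_).some
  fin_cases i <;> fin_cases j <;> simp_all [Z2]

theorem IsInducedP4.adj_of_isEmpty_pathGraph_embedding (hP6 : IsEmpty (pathGraph 6 ↪g G))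
    {a u v b x y : V} (hP : G.IsInducedP4 a u v b)
    (hxa : G.Adj x a) (hxu : ¬G.Adj x u) (hxv : ¬G.Adj x v) (hxb : ¬G.Adj x b)
    (hby : G.Adj b y) (hay : ¬G.Adj a y) (huy : ¬G.Adj u y) (hvy : ¬G.Adj v y) :
    G.Adj x y := by
  by_contra hxy
  obtain ⟨hau, huv, hvb, hav, hab, hub⟩ := hP
  refine hP6.false (nonempty_embedding_of_adj_iff_of_lt pathGraph_six_neighborSet_injective
    ![x, a, u, v, b, y] fun i j hij => ?_).some
  fin_cases i <;> fin_cases j <;> simp_all [pathGraph_adj]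

namespace Walk

variable {u v : V} {i j : ℕ}

theorem dist_getVert_of_length_eq_dist (w : G.Walk u v) (hw : w.length = G.dist u v)
    (hi : i ≤ w.length) : G.dist u (w.getVert i) = i := by
  have hle : G.dist u (w.getVert i) ≤ i := by
    simpa [take_length, hi] using dist_le (w.take i)
  have hrest : G.dist (w.getVert i) v ≤ w.length - i := by
    simpa [drop_length] using dist_le (w.drop i)
  have := (w.drop i).reachable.dist_triangle_right u
  omega

theorem adj_getVert_iff_of_length_eq_dist (w : G.Walk u v) (hw : w.length = G.dist u v)
    (hi : i ≤ w.length) (hj : j ≤ w.length) :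
    G.Adj (w.getVert i) (w.getVert j) ↔ i + 1 = j ∨ j + 1 = i := by
  constructor
  · intro h
    have hij : i ≠ j := by rintro rfl; exact G.irrefl h
    have := h.diff_dist_adj (u := u)
    rw [w.dist_getVert_of_length_eq_dist hw hi, w.dist_getVert_of_length_eq_dist hw hj] at this
    omega
  · rintro (rfl | rfl)
    · exact w.adj_getVert_succ (by omega)
    · exact (w.adj_getVert_succ (by omega)).symm

theorem isInducedP4_getVert_of_length_eq_dist (w : G.Walk u v) (hw : w.length = G.dist u v)
    (hi : i + 3 ≤ w.length) :
    G.IsInducedP4 (w.getVert i) (w.getVert (i + 1)) (w.getVert (i + 2)) (w.getVert (i + 3)) := by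
  refine ⟨?_, ?_, ?_, ?_, ?_, ?_⟩ <;>
    rw [w.adj_getVert_iff_of_length_eq_dist hw (by omega) (by omega)] <;> omega

end Walk

section Cut

variable [DecidableRel G.Adj] {s t T : Finset V}

theorem card_interedges_comm (s t : Finset V) :
    (G.interedges s t).card = (G.interedges t s).card := by
  have := G.symm
  exact Rel.card_interedges_comm s t

theorem card_interedges_le_card (hst : Disjoint s t) {F : Finset (Sym2 V)}
    (hF : ∀ x ∈ s, ∀ y ∈ t, G.Adj x y → s(x, y) ∈ F) : (G.interedges s t).card ≤ F.card := by
  refine Finset.card_le_card_of_injOn (fun e => s(e.1, e.2)) (fun e he => ?_) ?_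
  · rw [Finset.mem_coe, mem_interedges_iff] at he
    exact hF _ he.1 _ he.2.1 he.2.2
  · rintro ⟨x, y⟩ he ⟨x', y'⟩ he' h
    simp only [Finset.mem_coe, mk_mem_interedges_iff] at he he'
    rcases Sym2.eq_iff.mp h with ⟨rfl, rfl⟩ | ⟨rfl, rfl⟩
    · rfl
    · exact absurd he.1 (Finset.disjoint_right.mp hst he'.2.1)

theorem card_le_card_interedges_of_forall_exists_adj_left (hT : T ⊆ s)
    (h : ∀ x ∈ T, ∃ y ∈ t, G.Adj x y) : T.card ≤ (G.interedges s t).card := by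
  choose! f hft hadj using h
  exact Finset.card_le_card_of_injOn (fun x => (x, f x))
    (fun x hx => (G.mk_mem_interedges_iff).mpr ⟨hT hx, hft x hx, hadj x hx⟩)
    fun x _ y _ h => (Prod.ext_iff.mp h).1

theorem card_le_card_interedges_of_forall_exists_adj_right (hT : T ⊆ t)
    (h : ∀ y ∈ T, ∃ x ∈ s, G.Adj x y) : T.card ≤ (G.interedges s t).card := by
  rw [card_interedges_comm]
  exact card_le_card_interedges_of_forall_exists_adj_left hT fun y hy =>
    (h y hy).imp fun x ⟨hx, hxy⟩ => ⟨hx, hxy.symm⟩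

variable [Fintype V] [DecidableEq V]

theorem degree_le_card_interedges_compl {v : V} (hv : v ∈ s)
    (h : ∀ x ∈ s, ∃ y, G.Adj x y ∧ y ∉ s) : G.degree v ≤ (G.interedges s sᶜ).card := by
  choose! f hadj hfs using h
  rw [← card_neighborFinset_eq_degree]
  refine Finset.card_le_card_of_injOn (fun z => if z ∈ s then (z, f z) else (v, z))
    (fun z hz => ?_) fun z hz z' hz' hzz' => ?_
  · rw [Finset.mem_coe, mem_neighborFinset] at hz
    by_cases hzs : z ∈ s <;> simp [hzs, mk_mem_interedges_iff, hadj, hfs, hv, hz]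
  · simp only [Finset.mem_coe, mem_neighborFinset] at hz hz'
    by_cases hzs : z ∈ s <;> by_cases hz's : z' ∈ s <;>
      simp only [hzs, hz's, if_true, if_false, Prod.mk.injEq] at hzz'
    · exact hzz'.1
    · exact absurd (hzz'.1 ▸ hz) G.irrefl
    · exact absurd (hzz'.1 ▸ hz') G.irrefl
    · exact hzz'.2

theorem min_degree_le_card_interedges_compl_of_isInducedP4 (hZ2 : IsEmpty (Z2 ↪g G))
    (hP6 : IsEmpty (pathGraph 6 ↪g G)) {a u v b : V} (hP : G.IsInducedP4 a u v b)
    (ha : ∀ y, G.Adj a y → y ∈ s) (hb : ∀ y, G.Adj b y → y ∉ s) :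
    min (G.degree a) (G.degree b) ≤ (G.interedges s sᶜ).card := by
  have hu : u ∈ s := ha u hP.adj_au
  have hv : v ∉ s := hb v hP.adj_vb.symm
  by_cases hY : ∃ y, G.Adj b y ∧ ¬G.Adj u y
  · obtain ⟨y, hby, huy⟩ := hY
    have hy : y ∉ s := hb y hby
    have hvy : ¬G.Adj v y := fun h => hP.symm.not_adj_of_isEmpty_Z2_embedding hZ2 hby
      (fun h' => huy h'.symm) (fun h' => hy (ha y h'.symm)) h.symm
    refine (min_le_left _ _).trans ?_
    rw [← card_neighborFinset_eq_degree]
    refine card_le_card_interedges_of_forall_exists_adj_left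
      (fun x hx => ha x ((G.mem_neighborFinset a x).mp hx)) fun x hx => ?_
    rw [mem_neighborFinset] at hx
    by_cases hxv : G.Adj x v
    · exact ⟨v, Finset.mem_compl.mpr hv, hxv⟩
    have hxb : ¬G.Adj x b := fun h => hb x h.symm (ha x hx)
    exact ⟨y, Finset.mem_compl.mpr hy, hP.adj_of_isEmpty_pathGraph_embedding hP6 hx.symm
      (hP.not_adj_of_isEmpty_Z2_embedding hZ2 hx hxv hxb) hxv hxb hby
      (fun h => hy (ha y h)) huy hvy⟩
  · push Not at hY
    refine (min_le_right _ _).trans ?_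
    rw [← card_neighborFinset_eq_degree]
    exact card_le_card_interedges_of_forall_exists_adj_right
      (fun y hy => Finset.mem_compl.mpr (hb y ((G.mem_neighborFinset b y).mp hy)))
      fun y hy => ⟨u, hu, hY y ((G.mem_neighborFinset b y).mp hy)⟩

theorem degree_le_card_interedges_compl_of_isInducedP4 (hZ2 : IsEmpty (Z2 ↪g G))
    (hP6 : IsEmpty (pathGraph 6 ↪g G)) {a p u v b : V} (hP : G.IsInducedP4 p u v b)
    (hap : G.Adj a p) (hau : ¬G.Adj a u) (hav : ¬G.Adj a v) (hab : ¬G.Adj a b)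
    (ha : ∀ y, G.Adj a y → y ∈ s) (hb : ∀ y, G.Adj b y → y ∉ s) (hu : u ∈ s) :
    G.degree b ≤ (G.interedges s sᶜ).card := by
  rw [← card_neighborFinset_eq_degree]
  refine card_le_card_interedges_of_forall_exists_adj_right
    (fun y hy => Finset.mem_compl.mpr (hb y ((G.mem_neighborFinset b y).mp hy))) fun y hy => ?_
  rw [mem_neighborFinset] at hy
  by_cases huy : G.Adj u y
  · exact ⟨u, hu, huy⟩
  by_cases hpy : G.Adj p y
  · exact ⟨p, ha p hap, hpy⟩
  have hyu : ¬G.Adj y u := fun h => huy h.symm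
  have hyp : ¬G.Adj y p := fun h => hpy h.symm
  have hyv : ¬G.Adj y v := hP.symm.not_adj_of_isEmpty_Z2_embedding hZ2 hy hyu hyp
  have hya : G.Adj y a := hP.symm.adj_of_isEmpty_pathGraph_embedding hP6 hy.symm hyv hyu hyp
    hap.symm (fun h => hab h.symm) (fun h => hav h.symm) (fun h => hau h.symm)
  exact absurd (ha y hya.symm) (hb y hy)

theorem min_degree_le_card_interedges_compl (hZ2 : IsEmpty (Z2 ↪g G))
    (hP6 : IsEmpty (pathGraph 6 ↪g G)) {a b : V} (hab : G.Reachable a b) (has : a ∈ s)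
    (hbs : b ∉ s) (ha : ∀ y, G.Adj a y → y ∈ s) (hb : ∀ y, G.Adj b y → y ∉ s) :
    min (G.degree a) (G.degree b) ≤ (G.interedges s sᶜ).card := by
  obtain ⟨w, hw⟩ := hab.exists_walk_length_eq_dist
  have hadj := fun i j (hi : i ≤ w.length) (hj : j ≤ w.length) =>
    w.adj_getVert_iff_of_length_eq_dist hw hi hj
  have hP4 := fun i (hi : i + 3 ≤ w.length) => w.isInducedP4_getVert_of_length_eq_dist hw hi
  have h2 : 2 ≤ w.length := hw ▸ hab.one_lt_dist_of_ne_of_not_adj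
    (by rintro rfl; exact hbs has) fun h => hbs (ha b h)
  rcases (by omega : w.length = 2 ∨ w.length = 3 ∨ w.length = 4 ∨ 5 ≤ w.length)
    with h | h | h | h
  · have h01 := (hadj 0 1 (by omega) (by omega)).mpr (by omega)
    have h21 := (hadj w.length 1 le_rfl (by omega)).mpr (by omega)
    rw [w.getVert_zero] at h01
    rw [w.getVert_length] at h21
    exact absurd (ha _ h01) (hb _ h21)
  · have hP := hP4 0 (by omega)
    rw [w.getVert_zero, show 0 + 3 = w.length by omega, w.getVert_length] at hP
    exact min_degree_le_card_interedges_compl_of_isInducedP4 hZ2 hP6 hP ha hb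
  · have hP := hP4 1 (by omega)
    have hQ := (hP4 0 (by omega)).symm
    have hab' := (hadj 0 w.length (by omega) le_rfl).not.mpr (by omega)
    rw [show 1 + 3 = w.length by omega, w.getVert_length] at hP
    rw [w.getVert_zero] at hQ hab'
    rw [w.getVert_length] at hab'
    simp only [Nat.reduceAdd] at hP hQ
    by_cases hu : w.getVert 2 ∈ s
    · refine (min_le_right _ _).trans ?_
      exact degree_le_card_interedges_compl_of_isInducedP4 hZ2 hP6 hP hQ.adj_vb.symm
        (fun h => hQ.not_adj_ub h.symm) (fun h => hQ.not_adj_ab h.symm) hab' ha hb hu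
    · have := degree_le_card_interedges_compl_of_isInducedP4 (s := sᶜ) hZ2 hP6 hQ
        hP.adj_vb.symm (fun h => hP.not_adj_ub h.symm) (fun h => hP.not_adj_ab h.symm)
        (fun h => hab' h.symm) (fun y h => Finset.mem_compl.mpr (hb y h))
        (fun y h => by simpa using ha y h) (Finset.mem_compl.mpr hu)
      rw [compl_compl, card_interedges_comm] at this
      exact (min_le_left _ _).trans this
  · refine (hP6.false (nonempty_embedding_of_adj_iff pathGraph_six_neighborSet_injective
      (fun i => w.getVert i) fun i j => ?_).some).elim
    rw [hadj i j (by omega) (by omega), pathGraph_adj]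

theorem le_card_interedges_compl (hZ2 : IsEmpty (Z2 ↪g G)) (hP6 : IsEmpty (pathGraph 6 ↪g G))
    (hG : G.Preconnected) {δ : ℕ} (hδ : ∀ v, δ ≤ G.degree v) (hs : s.Nonempty)
    (hs' : sᶜ.Nonempty) :
    δ ≤ (G.interedges s sᶜ).card := by
  by_contra! hlt
  have exists_interior : ∀ t : Finset V, t.Nonempty → (G.interedges t tᶜ).card < δ →
      ∃ a ∈ t, ∀ y, G.Adj a y → y ∈ t := by
    rintro t ⟨v, hv⟩ ht
    by_contra! h
    exact ((hδ v).trans (degree_le_card_interedges_compl hv h)).not_gt ht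
  obtain ⟨a, has, ha⟩ := exists_interior s hs hlt
  obtain ⟨b, hbs, hb⟩ := exists_interior sᶜ hs' (by rwa [compl_compl, card_interedges_comm])
  have := min_degree_le_card_interedges_compl hZ2 hP6 (hG a b) has (Finset.mem_compl.mp hbs) ha
    fun y h => Finset.mem_compl.mp (hb y h)
  exact (le_min (hδ a) (hδ b)).not_gt (this.trans_lt hlt)

end Cut

theorem le_card_of_not_connected_deleteEdges [Fintype V] [DecidableRel G.Adj]
    (hZ2 : IsEmpty (Z2 ↪g G)) (hP6 : IsEmpty (pathGraph 6 ↪g G)) (hG : G.Connected) {δ : ℕ}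
    (hδ : ∀ v, δ ≤ G.degree v) {F : Finset (Sym2 V)} (hF : ¬(G.deleteEdges ↑F).Connected) :
    δ ≤ F.card := by
  classical
  have := hG.nonempty
  obtain ⟨x, y, hxy⟩ : ∃ x y, ¬(G.deleteEdges ↑F).Reachable x y := by
    by_contra! h
    exact hF ⟨h⟩
  let s := Finset.univ.filter ((G.deleteEdges ↑F).Reachable x)
  calc δ ≤ (G.interedges s sᶜ).card :=
        le_card_interedges_compl hZ2 hP6 hG.preconnected hδ ⟨x, by simp [s]⟩ ⟨y, by simp [s, hxy]⟩
    _ ≤ F.card := card_interedges_le_card disjoint_compl_right fun u hu w hw huw => by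
        by_contra huwF
        simp only [s, Finset.mem_compl, Finset.mem_filter, Finset.mem_univ, true_and] at hu hw
        exact hw (hu.trans (deleteEdges_adj.mpr ⟨huw, huwF⟩).reachable)

theorem not_connected_deleteEdges_incidenceSet [Nontrivial V] (v : V) :
    ¬(G.deleteEdges (G.incidenceSet v)).Connected := by
  intro h
  obtain ⟨u, hu⟩ := exists_ne v
  obtain ⟨p⟩ := h.preconnected v u
  cases p with
  | nil => exact hu rfl
  | cons hadj _ =>
    have hadj := deleteEdges_adj.mp hadj
    exact hadj.2 ⟨hadj.1, Sym2.mem_mk_left _ _⟩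

section Invariants

variable [Fintype V] [DecidableRel G.Adj]

variable (G) in
theorem ncard_neighborSet_eq_degree (v : V) : (G.neighborSet v).ncard = G.degree v := by
  rw [Set.ncard_eq_toFinset_card', ← card_neighborSet_eq_degree, Set.toFinset_card]

theorem minDeg_le_degree (v : V) : minDeg G ≤ G.degree v :=
  Nat.sInf_le ⟨v, (G.ncard_neighborSet_eq_degree v).symm⟩

theorem le_minDeg [Nonempty V] {n : ℕ} (h : ∀ v, n ≤ G.degree v) : n ≤ minDeg G :=
  le_csInf ⟨_, Classical.arbitrary V, rfl⟩ <| by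
    rintro _ ⟨v, rfl⟩
    exact G.ncard_neighborSet_eq_degree v ▸ h v

variable [DecidableEq V] [Nontrivial V]

theorem exists_card_eq_degree_not_connected_deleteEdges (v : V) :
    ∃ F : Finset (Sym2 V), ↑F ⊆ G.edgeSet ∧ F.card = G.degree v ∧
      ¬(G.deleteEdges ↑F).Connected :=
  ⟨G.incidenceFinset v, (G.coe_incidenceFinset v).symm ▸ G.incidenceSet_subset v,
    G.card_incidenceFinset_eq_degree v,
    (G.coe_incidenceFinset v).symm ▸ not_connected_deleteEdges_incidenceSet v⟩

theorem edgeConn_le_degree (v : V) : edgeConn G ≤ G.degree v :=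
  Nat.sInf_le (exists_card_eq_degree_not_connected_deleteEdges v)

theorem le_edgeConn {n : ℕ}
    (h : ∀ F : Finset (Sym2 V), ¬(G.deleteEdges ↑F).Connected → n ≤ F.card) : n ≤ edgeConn G :=
  le_csInf ⟨_, exists_card_eq_degree_not_connected_deleteEdges (Classical.arbitrary V)⟩ <| by
    rintro _ ⟨F, -, rfl, hF⟩
    exact h F hF

end Invariants

end SimpleGraph

/-- Every connected `{Z₂, P₆}`-free graph on at least 2 vertices has edge-connectivity
equal to its minimum degree. -/
theorem z2_p6_free_edgeConn_eq_minDeg {V : Type*} [Fintype V] (G : SimpleGraph V)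
    (hG : G.Connected) (hcard : 2 ≤ Fintype.card V)
    (hZ2 : IsEmpty (Z2 ↪g G)) (hP6 : IsEmpty (pathGraph 6 ↪g G)) :
    edgeConn G = minDeg G := by
  classical
  have : Nontrivial V := Fintype.one_lt_card_iff_nontrivial.mp hcard
  exact le_antisymm (le_minDeg (G := G) edgeConn_le_degree) (le_edgeConn fun _ hF =>
    le_card_of_not_connected_deleteEdges hZ2 hP6 hG minDeg_le_degree hF)
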